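/- Let p, q ∈ ℝⁿ with p ≠ q and let ω ∈ S^{n−1}. The Glassey–Strauss post-collisional variables satisfy the angle formula: (−(p⁰−q⁰)(p′⁰−q′⁰) + (p−q)·(p′−q′))/ϱ² = 1 − 8{ω·(p⁰q − q⁰p)}²/(D₁ ϱ²). -/

import Mathlib

noncomputable section

open MeasureTheory Metric Matrix

namespace RelBoltz

/-- The energy `p⁰ = √(c² + |p|²)` of a relativistic particle with momentum `p ∈ ℝⁿ`. -/
def energy (n : ℕ) (c : ℝ) (p : EuclideanSpace ℝ (Fin n)) : ℝ :=
  Real.sqrt (c ^ 2 + ‖p‖ ^ 2)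

/-- The Euclidean dot product on `ℝⁿ`. -/
def dot (n : ℕ) (p q : EuclideanSpace ℝ (Fin n)) : ℝ := ∑ i, p i * q i

/-- The relative momentum `ϱ(p,q) = √(2(p⁰q⁰ − p·q − c²))`. -/
def relMom (n : ℕ) (c : ℝ) (p q : EuclideanSpace ℝ (Fin n)) : ℝ :=
  Real.sqrt (2 * (energy n c p * energy n c q - dot n p q - c ^ 2))

/-- The quantity `s(p,q) = 2(p⁰q⁰ − p·q + c²)`. -/
def sQ (n : ℕ) (c : ℝ) (p q : EuclideanSpace ℝ (Fin n)) : ℝ :=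
  2 * (energy n c p * energy n c q - dot n p q + c ^ 2)

/-- The Minkowski metric `g = diag(−1, 1, …, 1)` as a `(1+n)×(1+n)` matrix. -/
def eta (n : ℕ) : Matrix (Fin (n + 1)) (Fin (n + 1)) ℝ :=
  Matrix.diagonal fun μ => if μ = 0 then -1 else 1

/-- A proper Lorentz transformation: `det Λ = 1` and `Λᵀ g Λ = g`. -/
def IsLorentz (n : ℕ) (Λ : Matrix (Fin (n + 1)) (Fin (n + 1)) ℝ) : Prop :=
  Λ.det = 1 ∧ Λᵀ * eta n * Λ = eta n

/-- The four-vector `p^μ = (p⁰, p) ∈ ℝ^{1+n}`. -/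
def fourVec (n : ℕ) (c : ℝ) (p : EuclideanSpace ℝ (Fin n)) : Fin (n + 1) → ℝ :=
  Fin.cons (energy n c p) fun i => p i

/-- Condition (CM): `Λ^μ_ν (p^ν + q^ν) = (√s, 0, …, 0)`. -/
def CM (n : ℕ) (c : ℝ) (Λ : Matrix (Fin (n + 1)) (Fin (n + 1)) ℝ)
    (p q : EuclideanSpace ℝ (Fin n)) : Prop :=
  Λ.mulVec (fourVec n c p + fourVec n c q) = Fin.cons (Real.sqrt (sQ n c p q)) (fun _ => (0 : ℝ))

/-- The candidate inverse `g Λᵀ g` of a Lorentz transformation. -/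
def Linv (n : ℕ) (Λ : Matrix (Fin (n + 1)) (Fin (n + 1)) ℝ) :
    Matrix (Fin (n + 1)) (Fin (n + 1)) ℝ :=
  eta n * Λᵀ * eta n

/-- The quantity `ρ = (p⁰+q⁰)/√s` appearing in the boost matrix. -/
def rhoB (n : ℕ) (c : ℝ) (p q : EuclideanSpace ℝ (Fin n)) : ℝ :=
  (energy n c p + energy n c q) / Real.sqrt (sQ n c p q)

/-- The boost matrix `Λ_b = [[ρ, −ρ vᵀ], [−ρ v, Iₙ + (ρ−1) v vᵀ/|v|²]]`
with `v = (p+q)/(p⁰+q⁰)`. -/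
def boost (n : ℕ) (c : ℝ) (p q : EuclideanSpace ℝ (Fin n)) :
    Matrix (Fin (n + 1)) (Fin (n + 1)) ℝ :=
  Matrix.of fun μ ν =>
    Fin.cases
      (Fin.cases (rhoB n c p q)
        (fun j => -rhoB n c p q * ((p j + q j) / (energy n c p + energy n c q))) ν)
      (fun i =>
        Fin.cases (-rhoB n c p q * ((p i + q i) / (energy n c p + energy n c q)))
          (fun j =>
            (if i = j then (1 : ℝ) else 0) +
              (rhoB n c p q - 1) *
                ((p i + q i) / (energy n c p + energy n c q)) *
                ((p j + q j) / (energy n c p + energy n c q)) /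
                (∑ k, ((p k + q k) / (energy n c p + energy n c q)) ^ 2)) ν) μ

/-- The vector `k ∈ ℝⁿ`, `k^i = Λ^i_μ (p^μ − q^μ)` (spatial rows of `Λ` applied
to `p^μ − q^μ`). -/
def kvec (n : ℕ) (c : ℝ) (Λ : Matrix (Fin (n + 1)) (Fin (n + 1)) ℝ)
    (p q : EuclideanSpace ℝ (Fin n)) : EuclideanSpace ℝ (Fin n) :=
  WithLp.toLp 2 fun i => Λ.mulVec (fourVec n c p - fourVec n c q) i.succ

/-- `ω̄^μ = (√s/2, (ϱ/2)ω)`. -/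
def wbar (n : ℕ) (c : ℝ) (p q ω : EuclideanSpace ℝ (Fin n)) : Fin (n + 1) → ℝ :=
  Fin.cons (Real.sqrt (sQ n c p q) / 2) fun i => (relMom n c p q / 2) * ω i

/-- `ω̃^μ = (√s/2, −(ϱ/2)ω)`. -/
def wtil (n : ℕ) (c : ℝ) (p q ω : EuclideanSpace ℝ (Fin n)) : Fin (n + 1) → ℝ :=
  Fin.cons (Real.sqrt (sQ n c p q) / 2) fun i => -(relMom n c p q / 2) * ω i

/-- The center-of-momentum post-collisional four-vector `p′^μ = (Λ⁻¹)^μ_ν ω̄^ν`. -/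
def postP (n : ℕ) (c : ℝ) (Λ : Matrix (Fin (n + 1)) (Fin (n + 1)) ℝ)
    (p q ω : EuclideanSpace ℝ (Fin n)) : Fin (n + 1) → ℝ :=
  (Linv n Λ).mulVec (wbar n c p q ω)

/-- The center-of-momentum post-collisional four-vector `q′^μ = (Λ⁻¹)^μ_ν ω̃^ν`. -/
def postQ (n : ℕ) (c : ℝ) (Λ : Matrix (Fin (n + 1)) (Fin (n + 1)) ℝ)
    (p q ω : EuclideanSpace ℝ (Fin n)) : Fin (n + 1) → ℝ :=
  (Linv n Λ).mulVec (wtil n c p q ω)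

/-- The spatial part of a vector in `ℝ^{1+n}`. -/
def spat (n : ℕ) (u : Fin (n + 1) → ℝ) : EuclideanSpace ℝ (Fin n) :=
  WithLp.toLp 2 fun i => u i.succ

/-- `D₁ = (p⁰+q⁰)² − (ω·(p+q))²`. -/
def D1 (n : ℕ) (c : ℝ) (p q ω : EuclideanSpace ℝ (Fin n)) : ℝ :=
  (energy n c p + energy n c q) ^ 2 - dot n ω (p + q) ^ 2

/-- `D₂ = (p⁰+q⁰){ω·(p⁰q − q⁰p)}`. -/
def D2 (n : ℕ) (c : ℝ) (p q ω : EuclideanSpace ℝ (Fin n)) : ℝ :=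
  (energy n c p + energy n c q) * dot n ω (energy n c p • q - energy n c q • p)

/-- `a(p,q,ω) = 2(p⁰+q⁰){ω·(p⁰q − q⁰p)}/D₁`. -/
def aGS (n : ℕ) (c : ℝ) (p q ω : EuclideanSpace ℝ (Fin n)) : ℝ :=
  2 * (energy n c p + energy n c q) * dot n ω (energy n c p • q - energy n c q • p) /
    D1 n c p q ω

/-- `N⁰(p,q,ω) = 2{ω·(p+q)}{ω·(p⁰q − q⁰p)}/D₁`. -/
def N0 (n : ℕ) (c : ℝ) (p q ω : EuclideanSpace ℝ (Fin n)) : ℝ :=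
  2 * dot n ω (p + q) * dot n ω (energy n c p • q - energy n c q • p) / D1 n c p q ω

/-- The Glassey–Strauss post-collisional momentum `p′ = p + a(p,q,ω)ω`. -/
def gsP (n : ℕ) (c : ℝ) (p q ω : EuclideanSpace ℝ (Fin n)) : EuclideanSpace ℝ (Fin n) :=
  p + aGS n c p q ω • ω

/-- The Glassey–Strauss post-collisional momentum `q′ = q − a(p,q,ω)ω`. -/
def gsQ (n : ℕ) (c : ℝ) (p q ω : EuclideanSpace ℝ (Fin n)) : EuclideanSpace ℝ (Fin n) :=
  q - aGS n c p q ω • ω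

/-- The Glassey–Strauss kernel `B(p,q,ω)`. -/
def BGS (n : ℕ) (c : ℝ) (p q ω : EuclideanSpace ℝ (Fin n)) : ℝ :=
  c * (energy n c p + energy n c q) ^ 2 * energy n c p * energy n c q *
    |dot n ω ((energy n c p)⁻¹ • p - (energy n c q)⁻¹ • q)| / D1 n c p q ω ^ 2

/-- The dimensional factor `A(p,q,ω)`. -/
def AGS (n : ℕ) (c : ℝ) (p q ω : EuclideanSpace ℝ (Fin n)) : ℝ :=
  (4 / relMom n c p q) * (energy n c p + energy n c q) * energy n c p * energy n c q *
    |dot n ω ((energy n c p)⁻¹ • p - (energy n c q)⁻¹ • q)| / D1 n c p q ω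

/-- The dimensional Glassey–Strauss kernel `B_n(p,q,ω) = B(p,q,ω)·(A(p,q,ω))^{n−3}`. -/
def Bn (n : ℕ) (c : ℝ) (p q ω : EuclideanSpace ℝ (Fin n)) : ℝ :=
  BGS n c p q ω * AGS n c p q ω ^ ((n : ℤ) - 3)

/-- The Møller velocity `v_ø(p,q) = (c/4) ϱ √s / (p⁰q⁰)`. -/
def moller (n : ℕ) (c : ℝ) (p q : EuclideanSpace ℝ (Fin n)) : ℝ :=
  (c / 4) * relMom n c p q * Real.sqrt (sQ n c p q) / (energy n c p * energy n c q)

/-- The explicit boost form of the combination appearing in the center-of-momentum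
post-collisional momenta. -/
def cmDir (n : ℕ) (c : ℝ) (p q ω : EuclideanSpace ℝ (Fin n)) : EuclideanSpace ℝ (Fin n) :=
  ω + ((rhoB n c p q - 1) * dot n (p + q) ω / ‖p + q‖ ^ 2) • (p + q)

/-- The explicit boost form of the center-of-momentum post-collisional momentum `p′`. -/
def cmP (n : ℕ) (c : ℝ) (p q ω : EuclideanSpace ℝ (Fin n)) : EuclideanSpace ℝ (Fin n) :=
  (1 / 2 : ℝ) • (p + q) + (relMom n c p q / 2) • cmDir n c p q ω

/-- The explicit boost form of the center-of-momentum post-collisional momentum `q′`. -/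
def cmQ (n : ℕ) (c : ℝ) (p q ω : EuclideanSpace ℝ (Fin n)) : EuclideanSpace ℝ (Fin n) :=
  (1 / 2 : ℝ) • (p + q) - (relMom n c p q / 2) • cmDir n c p q ω

/-- The explicit boost form of the vector `k`. -/
def kB (n : ℕ) (c : ℝ) (p q : EuclideanSpace ℝ (Fin n)) : EuclideanSpace ℝ (Fin n) :=
  (-(energy n c p - energy n c q) / Real.sqrt (sQ n c p q)) • (p + q) + (p - q) +
    ((rhoB n c p q - 1) * dot n (p + q) (p - q) / ‖p + q‖ ^ 2) • (p + q)

/-- The center-of-momentum scattering angle `cos θ_cm = (k/|k|)·ω`. -/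
def cosCM (n : ℕ) (c : ℝ) (p q ω : EuclideanSpace ℝ (Fin n)) : ℝ :=
  dot n (kB n c p q) ω / ‖kB n c p q‖

/-- The Glassey–Strauss scattering angle
`cos θ_gs = 1 − 8{ω·(p⁰q − q⁰p)}²/(D₁ϱ²)`. -/
def cosGS (n : ℕ) (c : ℝ) (p q ω : EuclideanSpace ℝ (Fin n)) : ℝ :=
  1 - 8 * dot n ω (energy n c p • q - energy n c q • p) ^ 2 /
    (D1 n c p q ω * relMom n c p q ^ 2)

/-- The surface measure on the unit sphere `S^{n−1} ⊂ ℝⁿ`. -/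
def sphMeasure (n : ℕ) : Measure (sphere (0 : EuclideanSpace ℝ (Fin n)) 1) :=
  (volume : Measure (EuclideanSpace ℝ (Fin n))).toSphere

/-! Write `X = ω·p`, `Y = ω·q` and `u = ω·(p⁰q − q⁰p) = p⁰Y − q⁰X`, so that
`a = 2(p⁰+q⁰)u/D₁`. With `N⁰ = 2(X+Y)u/D₁` one checks `c² + |p + aω|² = (p⁰ + N⁰)²` and
`p⁰ + N⁰ > 0`, hence `p′⁰ = p⁰ + N⁰`, and by the symmetry `p ↔ q` also `q′⁰ = q⁰ − N⁰`.
The numerator of the left-hand side is then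
`|p − q|² − (p⁰ − q⁰)² + 2a(X − Y) − 2(p⁰ − q⁰)N⁰ = ϱ² − 8u²/D₁`. -/

open RealInnerProductSpace

variable {n : ℕ} {c : ℝ}

lemma dot_eq_inner (p q : EuclideanSpace ℝ (Fin n)) : dot n p q = ⟪p, q⟫ := by
  simp [dot, PiLp.inner_apply, mul_comm]

lemma energy_sq (p : EuclideanSpace ℝ (Fin n)) : energy n c p ^ 2 = c ^ 2 + ‖p‖ ^ 2 :=
  Real.sq_sqrt (by positivity)

lemma norm_lt_energy (hc : c ≠ 0) (p : EuclideanSpace ℝ (Fin n)) : ‖p‖ < energy n c p :=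
  Real.lt_sqrt_of_sq_lt (lt_add_of_pos_left _ (by positivity))

lemma energy_pos (hc : c ≠ 0) (p : EuclideanSpace ℝ (Fin n)) : 0 < energy n c p :=
  (norm_nonneg p).trans_lt (norm_lt_energy hc p)

lemma abs_dot_le_norm {ω : EuclideanSpace ℝ (Fin n)} (hω : ‖ω‖ = 1)
    (p : EuclideanSpace ℝ (Fin n)) : |dot n ω p| ≤ ‖p‖ := by
  simpa [dot_eq_inner, hω] using abs_real_inner_le_norm ω p

lemma dot_add_right (ω p q : EuclideanSpace ℝ (Fin n)) :
    dot n ω (p + q) = dot n ω p + dot n ω q := by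
  simp [dot_eq_inner, inner_add_right]

lemma dot_sub_right (ω p q : EuclideanSpace ℝ (Fin n)) :
    dot n ω (p - q) = dot n ω p - dot n ω q := by
  simp [dot_eq_inner, inner_sub_right]

lemma dot_smul_sub_smul (ω p q : EuclideanSpace ℝ (Fin n)) (s t : ℝ) :
    dot n ω (s • q - t • p) = s * dot n ω q - t * dot n ω p := by
  simp [dot_eq_inner, inner_sub_right, real_inner_smul_right]

lemma D1_eq (p q ω : EuclideanSpace ℝ (Fin n)) : D1 n c p q ω =
    (energy n c p + energy n c q) ^ 2 - (dot n ω p + dot n ω q) ^ 2 := by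
  rw [D1, dot_add_right]

lemma aGS_eq (p q ω : EuclideanSpace ℝ (Fin n)) : aGS n c p q ω =
    2 * (energy n c p + energy n c q) * (energy n c p * dot n ω q - energy n c q * dot n ω p) /
      D1 n c p q ω := by
  rw [aGS, dot_smul_sub_smul]

lemma N0_eq (p q ω : EuclideanSpace ℝ (Fin n)) : N0 n c p q ω =
    2 * (dot n ω p + dot n ω q) * (energy n c p * dot n ω q - energy n c q * dot n ω p) /
      D1 n c p q ω := by
  rw [N0, dot_add_right, dot_smul_sub_smul]

lemma D1_pos (hc : c ≠ 0) {ω : EuclideanSpace ℝ (Fin n)} (hω : ‖ω‖ = 1)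
    (p q : EuclideanSpace ℝ (Fin n)) : 0 < D1 n c p q ω := by
  have hω_pq : |dot n ω (p + q)| < energy n c p + energy n c q :=
    calc |dot n ω (p + q)| ≤ ‖p + q‖ := abs_dot_le_norm hω _
      _ ≤ ‖p‖ + ‖q‖ := norm_add_le p q
      _ < energy n c p + energy n c q := add_lt_add (norm_lt_energy hc p) (norm_lt_energy hc q)
  exact sub_pos.mpr (sq_lt_sq' (abs_lt.mp hω_pq).1 (abs_lt.mp hω_pq).2)

lemma numerator_energy_add_N0_pos {P Q X Y : ℝ} (hX : |X| < P) (hY : |Y| < Q) :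
    0 < P * ((P + Q) ^ 2 - (X + Y) ^ 2) + 2 * (X + Y) * (P * Y - Q * X) := by
  have hP : 0 < P := (abs_nonneg X).trans_lt hX
  have hXY : X * Y < P * Q := by
    calc X * Y ≤ |X| * |Y| := by rw [← abs_mul]; exact le_abs_self _
      _ < P * Q := mul_lt_mul'' hX hY (abs_nonneg X) (abs_nonneg Y)
  have hX2 : X ^ 2 < P ^ 2 := sq_lt_sq' (abs_lt.mp hX).1 (abs_lt.mp hX).2
  have key : P * (P * ((P + Q) ^ 2 - (X + Y) ^ 2) + 2 * (X + Y) * (P * Y - Q * X))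
      = (P * (P + Q) - (X + Y) * X) ^ 2 + (X + Y) ^ 2 * (P ^ 2 - X ^ 2) := by ring
  have hlin : 0 < P * (P + Q) - (X + Y) * X := by linarith
  refine pos_of_mul_pos_right ?_ hP.le
  rw [key]
  exact add_pos_of_pos_of_nonneg (pow_pos hlin 2)
    (mul_nonneg (sq_nonneg _) (sub_nonneg.mpr hX2.le))

lemma energy_add_N0_pos (hc : c ≠ 0) {ω : EuclideanSpace ℝ (Fin n)} (hω : ‖ω‖ = 1)
    (p q : EuclideanSpace ℝ (Fin n)) : 0 < energy n c p + N0 n c p q ω := by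
  have hD := D1_pos hc hω p q
  have hnum := numerator_energy_add_N0_pos
    ((abs_dot_le_norm hω p).trans_lt (norm_lt_energy hc p))
    ((abs_dot_le_norm hω q).trans_lt (norm_lt_energy hc q))
  rw [← D1_eq] at hnum
  have h : energy n c p + N0 n c p q ω =
      (energy n c p * D1 n c p q ω +
        2 * (dot n ω p + dot n ω q) * (energy n c p * dot n ω q - energy n c q * dot n ω p)) /
        D1 n c p q ω := by
    rw [N0_eq]; field_simp
  rw [h]
  exact div_pos hnum hD

lemma norm_gsP_sq {ω : EuclideanSpace ℝ (Fin n)} (hω : ‖ω‖ = 1)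
    (p q : EuclideanSpace ℝ (Fin n)) :
    ‖gsP n c p q ω‖ ^ 2 = ‖p‖ ^ 2 + 2 * aGS n c p q ω * dot n ω p + aGS n c p q ω ^ 2 := by
  rw [gsP, norm_add_sq_real, real_inner_smul_right, norm_smul, hω, dot_eq_inner,
    real_inner_comm, mul_one, Real.norm_eq_abs, sq_abs]
  ring

lemma energy_gsP (hc : c ≠ 0) {ω : EuclideanSpace ℝ (Fin n)} (hω : ‖ω‖ = 1)
    (p q : EuclideanSpace ℝ (Fin n)) :
    energy n c (gsP n c p q ω) = energy n c p + N0 n c p q ω := by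
  have hD := (D1_pos hc hω p q).ne'
  rw [energy, ← Real.sqrt_sq (energy_add_N0_pos hc hω p q).le, norm_gsP_sq hω, aGS_eq, N0_eq]
  congr 1
  field_simp
  set P := energy n c p
  set Q := energy n c q
  set X := dot n ω p
  set Y := dot n ω q
  linear_combination (-D1 n c p q ω ^ 2) * energy_sq (c := c) p -
    4 * (P * Y - Q * X) ^ 2 * D1_eq (c := c) p q ω

lemma aGS_swap (p q ω : EuclideanSpace ℝ (Fin n)) : aGS n c q p ω = -aGS n c p q ω := by
  rw [aGS_eq, aGS_eq, D1_eq, D1_eq]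
  ring

lemma N0_swap (p q ω : EuclideanSpace ℝ (Fin n)) : N0 n c q p ω = -N0 n c p q ω := by
  rw [N0_eq, N0_eq, D1_eq, D1_eq]
  ring

lemma gsQ_eq_gsP_swap (p q ω : EuclideanSpace ℝ (Fin n)) : gsQ n c p q ω = gsP n c q p ω := by
  rw [gsQ, gsP, aGS_swap q p, neg_smul, sub_neg_eq_add]

lemma energy_gsQ (hc : c ≠ 0) {ω : EuclideanSpace ℝ (Fin n)} (hω : ‖ω‖ = 1)
    (p q : EuclideanSpace ℝ (Fin n)) :
    energy n c (gsQ n c p q ω) = energy n c q - N0 n c p q ω := by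
  rw [gsQ_eq_gsP_swap, energy_gsP hc hω, N0_swap, sub_eq_add_neg]

lemma dot_add_sq_lt_energy_mul (hc : c ≠ 0) {p q : EuclideanSpace ℝ (Fin n)} (hpq : p ≠ q) :
    dot n p q + c ^ 2 < energy n c p * energy n c q := by
  have hcs : dot n p q ^ 2 ≤ (‖p‖ * ‖q‖) ^ 2 := by
    rw [dot_eq_inner, ← sq_abs]
    gcongr
    exact abs_real_inner_le_norm p q
  have hpq' : 0 < c ^ 2 * ‖p - q‖ ^ 2 := by
    have := norm_sub_pos_iff.mpr hpq
    positivity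
  -- `(p⁰q⁰)² − (p·q + c²)² = c²|p − q|² + (|p|²|q|² − (p·q)²)`
  have hsq : (dot n p q + c ^ 2) ^ 2 < (energy n c p * energy n c q) ^ 2 := by
    rw [mul_pow, energy_sq, energy_sq]
    rw [norm_sub_sq_real, ← dot_eq_inner] at hpq'
    nlinarith
  exact lt_of_pow_lt_pow_left₀ 2 (mul_pos (energy_pos hc p) (energy_pos hc q)).le hsq

lemma relMom_pos (hc : c ≠ 0) {p q : EuclideanSpace ℝ (Fin n)} (hpq : p ≠ q) :
    0 < relMom n c p q :=
  Real.sqrt_pos.mpr (by linarith [dot_add_sq_lt_energy_mul hc hpq])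

lemma relMom_sq (hc : c ≠ 0) {p q : EuclideanSpace ℝ (Fin n)} (hpq : p ≠ q) :
    relMom n c p q ^ 2 = ‖p - q‖ ^ 2 - (energy n c p - energy n c q) ^ 2 := by
  rw [relMom, Real.sq_sqrt (by linarith [dot_add_sq_lt_energy_mul hc hpq]), norm_sub_sq_real,
    ← dot_eq_inner]
  linear_combination energy_sq (c := c) p + energy_sq (c := c) q

lemma dot_sub_gsP_sub_gsQ (p q ω : EuclideanSpace ℝ (Fin n)) :
    dot n (p - q) (gsP n c p q ω - gsQ n c p q ω) =
      ‖p - q‖ ^ 2 + 2 * aGS n c p q ω * dot n ω (p - q) := by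
  have : gsP n c p q ω - gsQ n c p q ω = (p - q) + (2 * aGS n c p q ω) • ω := by
    rw [gsP, gsQ]; module
  rw [this, dot_eq_inner, dot_eq_inner, inner_add_right, real_inner_smul_right,
    real_inner_self_eq_norm_sq, real_inner_comm, mul_assoc]

lemma aGS_mul_sub_N0_mul (p q ω : EuclideanSpace ℝ (Fin n)) :
    2 * aGS n c p q ω * dot n ω (p - q) - 2 * (energy n c p - energy n c q) * N0 n c p q ω =
      -8 * dot n ω (energy n c p • q - energy n c q • p) ^ 2 / D1 n c p q ω := by
  rw [aGS_eq, N0_eq, dot_sub_right, dot_smul_sub_smul]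
  ring

theorem statement13_general (n : ℕ) (c : ℝ) (hc : 0 < c)
    (p q : EuclideanSpace ℝ (Fin n)) (hpq : p ≠ q)
    (ω : EuclideanSpace ℝ (Fin n)) (hω : ‖ω‖ = 1) :
    (-((energy n c p - energy n c q) *
          (energy n c (gsP n c p q ω) - energy n c (gsQ n c p q ω))) +
        dot n (p - q) (gsP n c p q ω - gsQ n c p q ω)) / relMom n c p q ^ 2 =
    1 - 8 * dot n ω (energy n c p • q - energy n c q • p) ^ 2 /
        (D1 n c p q ω * relMom n c p q ^ 2) := by
  have hϱ := (relMom_pos hc.ne' hpq).ne'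
  have hnum : -((energy n c p - energy n c q) *
        (energy n c p + N0 n c p q ω - (energy n c q - N0 n c p q ω))) +
      (‖p - q‖ ^ 2 + 2 * aGS n c p q ω * dot n ω (p - q)) =
      relMom n c p q ^ 2 -
        8 * dot n ω (energy n c p • q - energy n c q • p) ^ 2 / D1 n c p q ω := by
    rw [relMom_sq hc.ne' hpq]
    linear_combination aGS_mul_sub_N0_mul (c := c) p q ω
  rw [energy_gsP hc.ne' hω, energy_gsQ hc.ne' hω, dot_sub_gsP_sub_gsQ, hnum, sub_div,
    div_self (pow_ne_zero 2 hϱ), div_div]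

/-- the Glassey–Strauss post-collisional variables satisfy the angle
formula `(−(p⁰−q⁰)(p′⁰−q′⁰) + (p−q)·(p′−q′))/ϱ² = 1 − 8{ω·(p⁰q − q⁰p)}²/(D₁ϱ²)`. -/
theorem statement13 (n : ℕ) (hn : 2 ≤ n) (c : ℝ) (hc : 0 < c)
    (p q : EuclideanSpace ℝ (Fin n)) (hpq : p ≠ q)
    (ω : EuclideanSpace ℝ (Fin n)) (hω : ‖ω‖ = 1) :
    (-((energy n c p - energy n c q) *
          (energy n c (gsP n c p q ω) - energy n c (gsQ n c p q ω))) +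
        dot n (p - q) (gsP n c p q ω - gsQ n c p q ω)) / relMom n c p q ^ 2 =
    1 - 8 * dot n ω (energy n c p • q - energy n c q • p) ^ 2 /
        (D1 n c p q ω * relMom n c p q ^ 2) :=
  statement13_general n c hc p q hpq ω hω

end RelBoltz
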